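/- arXiv:1910.01018 — 6 statements merged into one kernel-verified Lean document; each statement's English description precedes it below -/
import Mathlib

section
/- Let T be an infinite locally finite tree equipped with an end-orientation σ, let A be a finite set of vertices of T, and let k, r ≥ 1 be integers with k ≤ |A|. Then the number of vertices of T that are (k,r)-supported for A with respect to σ is at most r(2|A| − k)/k. -/
/-!
Group the supported vertices by their depth modulo `r` below a common ancestor. If `u` lies
strictly below a supported `v` of the same class, the distance is a positive multiple of `r`,
so `u` is a descendant of some `w` with `σ^r w = v` and `|A_u| + k ≤ |A_w| + k ≤ |A_v|`.
Ordered by descent, the sets `A_u` are nested along chains and disjoint for incomparable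
vertices, so each class is a forest in which every vertex carries mass at least `k` and
exceeds each of its descendants by at least `k`. Induction over the forest gives
`k (|T| + #roots) ≤ 2 Σ_roots |A_ρ| ≤ 2 |A|`, and summing `k (|T| + 1) ≤ 2|A|` over the `r`
classes gives `k |S| + k r ≤ 2 r |A|`.
-/

variable {V : Type*}

/-- An end-orientation of an infinite locally finite tree `T`: a map `σ` from the vertex set to
itself such that (i) `σ v` is adjacent to `v`; (ii) `σ^[n] v ≠ v` for every `n ≥ 1`; and
(iii) any two vertices have a common iterated image. -/
def IsEndOrientation (G : SimpleGraph V) (σ : V → V) : Prop :=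
  (∀ v, G.Adj v (σ v)) ∧ (∀ v, ∀ n : ℕ, 1 ≤ n → σ^[n] v ≠ v) ∧
    (∀ u v, ∃ m n : ℕ, σ^[m] u = σ^[n] v)

/-- `u` is a descendant of `v` (with respect to the end-orientation `σ`). -/
def IsDescendant (σ : V → V) (u v : V) : Prop := ∃ j : ℕ, σ^[j] u = v

/-- `A_v`: the set of elements of `A \ {v}` that are descendants of `v`. -/
def DescSet (σ : V → V) (A : Set V) (v : V) : Set V :=
  {a | a ∈ A ∧ a ≠ v ∧ IsDescendant σ a v}

/-- `u` is `(k,r)`-supported for `A` (with respect to `σ`): there is at least one `w` with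
`σ^[r] w = u`, and `|A_u| - |A_w| ≥ k` for every such `w`. -/
def IsSupported (σ : V → V) (A : Set V) (k r : ℕ) (u : V) : Prop :=
  (∃ w, σ^[r] w = u) ∧
    ∀ w, σ^[r] w = u →
      (k : ℤ) ≤ ((DescSet σ A u).ncard : ℤ) - ((DescSet σ A w).ncard : ℤ)

open Finset

namespace IsDescendant

theorem refl (σ : V → V) (v : V) : IsDescendant σ v v := ⟨0, rfl⟩

variable {σ : V → V} {u v w : V}

theorem trans (h₁ : IsDescendant σ u v) (h₂ : IsDescendant σ v w) : IsDescendant σ u w := by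
  obtain ⟨i, rfl⟩ := h₁
  obtain ⟨j, rfl⟩ := h₂
  exact ⟨j + i, Function.iterate_add_apply σ j i u⟩

theorem antisymm (hσ : ∀ v : V, ∀ n : ℕ, 1 ≤ n → σ^[n] v ≠ v)
    (h₁ : IsDescendant σ u v) (h₂ : IsDescendant σ v u) : u = v := by
  obtain ⟨i, rfl⟩ := h₁
  obtain ⟨j, hj⟩ := h₂
  rcases Nat.eq_zero_or_pos (j + i) with h | h
  · simp [show i = 0 by omega]
  · exact absurd (by rw [Function.iterate_add_apply, hj]) (hσ u (j + i) h)

theorem total_of_isDescendant {x : V} (hu : IsDescendant σ x u) (hv : IsDescendant σ x v) :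
    IsDescendant σ u v ∨ IsDescendant σ v u := by
  obtain ⟨i, rfl⟩ := hu
  obtain ⟨j, rfl⟩ := hv
  rcases le_total i j with h | h
  · exact .inl ⟨j - i, by rw [← Function.iterate_add_apply, Nat.sub_add_cancel h]⟩
  · exact .inr ⟨i - j, by rw [← Function.iterate_add_apply, Nat.sub_add_cancel h]⟩

end IsDescendant

abbrev descendantOrder (σ : V → V) (hσ : ∀ v : V, ∀ n : ℕ, 1 ≤ n → σ^[n] v ≠ v) :
    PartialOrder V where
  le := IsDescendant σ
  le_refl := IsDescendant.refl σ
  le_trans _ _ _ := IsDescendant.trans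
  le_antisymm _ _ := IsDescendant.antisymm hσ

theorem iterate_injective_of_not_periodic {σ : V → V}
    (hσ : ∀ v : V, ∀ n : ℕ, 1 ≤ n → σ^[n] v ≠ v) (u : V) :
    Function.Injective fun n => σ^[n] u := by
  intro m n h
  by_contra hne
  wlog hlt : m < n generalizing m n
  · exact this h.symm (Ne.symm hne) (by omega)
  apply hσ (σ^[m] u) (n - m) (by omega)
  rw [← Function.iterate_add_apply, Nat.sub_add_cancel hlt.le]
  exact h.symm

theorem exists_forall_isDescendant {σ : V → V} (hdir : ∀ u v : V, ∃ m n : ℕ, σ^[m] u = σ^[n] v)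
    {S : Finset V} (hS : S.Nonempty) : ∃ z, ∀ u ∈ S, IsDescendant σ u z := by
  induction hS using Finset.Nonempty.cons_induction with
  | singleton a => exact ⟨a, by simpa using IsDescendant.refl σ a⟩
  | cons a s _ _ ih =>
    obtain ⟨z, hz⟩ := ih
    obtain ⟨m, n, hmn⟩ := hdir a z
    have hzn : IsDescendant σ z (σ^[n] z) := ⟨n, rfl⟩
    refine ⟨σ^[n] z, ?_⟩
    simp only [mem_cons, forall_eq_or_imp]
    exact ⟨⟨m, hmn⟩, fun u hu => (hz u hu).trans hzn⟩

theorem exists_depth {σ : V → V} (hσ : ∀ v : V, ∀ n : ℕ, 1 ≤ n → σ^[n] v ≠ v)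
    (hdir : ∀ u v : V, ∃ m n : ℕ, σ^[m] u = σ^[n] v) (S : Finset V) :
    ∃ d : V → ℕ, ∀ u ∈ S, ∀ v ∈ S, ∀ j, σ^[j] u = v → d u = d v + j := by
  rcases S.eq_empty_or_nonempty with rfl | hS
  · exact ⟨0, by simp⟩
  obtain ⟨z, hz⟩ := exists_forall_isDescendant hdir hS
  choose! d hd using hz
  refine ⟨d, fun u hu v hv j huv => iterate_injective_of_not_periodic hσ u ?_⟩
  simp only [Function.iterate_add_apply, huv, hd u hu, hd v hv]

section DescSet

variable {σ : V → V} {A : Set V} {k r : ℕ} {u v : V}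

theorem descSet_mono (hσ : ∀ v : V, ∀ n : ℕ, 1 ≤ n → σ^[n] v ≠ v)
    (huv : IsDescendant σ u v) : DescSet σ A u ⊆ DescSet σ A v := by
  rintro a ⟨ha, hau, hdesc⟩
  refine ⟨ha, ?_, hdesc.trans huv⟩
  rintro rfl
  exact hau (IsDescendant.antisymm hσ huv hdesc).symm

theorem disjoint_descSet (huv : ¬IsDescendant σ u v) (hvu : ¬IsDescendant σ v u) :
    Disjoint (DescSet σ A u) (DescSet σ A v) :=
  Set.disjoint_left.2 fun _ hu hv => (hu.2.2.total_of_isDescendant hv.2.2).elim huv hvu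

theorem IsSupported.le_ncard_descSet (hv : IsSupported σ A k r v) :
    k ≤ (DescSet σ A v).ncard := by
  obtain ⟨⟨w, hw⟩, hgap⟩ := hv
  have := hgap w hw
  omega

theorem IsSupported.ncard_descSet_add_le (hσ : ∀ v : V, ∀ n : ℕ, 1 ≤ n → σ^[n] v ≠ v)
    (hA : A.Finite) (hv : IsSupported σ A k r v) {j : ℕ} (huv : σ^[j] u = v) (hrj : r ≤ j) :
    (DescSet σ A u).ncard + k ≤ (DescSet σ A v).ncard := by
  have hw : σ^[r] (σ^[j - r] u) = v := by
    rw [← Function.iterate_add_apply, Nat.add_sub_cancel' hrj, huv]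
  have hgap := hv.2 _ hw
  have hle : (DescSet σ A u).ncard ≤ (DescSet σ A (σ^[j - r] u)).ncard :=
    Set.ncard_le_ncard (descSet_mono hσ ⟨j - r, rfl⟩) (hA.subset fun _ ha => ha.1)
  omega

end DescSet

section Forest

open scoped Classical

variable {α β : Type*} [PartialOrder α] {B : α → Finset β} {k : ℕ}

theorem le_total_of_le_of_le (hB : Monotone B)
    (hdisj : ∀ u v, ¬u ≤ v → ¬v ≤ u → Disjoint (B u) (B v)) {x u v : α}
    (hx : (B x).Nonempty) (hu : x ≤ u) (hv : x ≤ v) : u ≤ v ∨ v ≤ u := by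
  by_contra! h
  obtain ⟨b, hb⟩ := hx
  exact disjoint_left.1 (hdisj u v h.1 h.2) (hB hu hb) (hB hv hb)

theorem sum_card_le_card_of_isAntichain
    (hdisj : ∀ u v, ¬u ≤ v → ¬v ≤ u → Disjoint (B u) (B v)) {C : Finset α}
    (hC : IsAntichain (· ≤ ·) (C : Set α)) {W : Finset β} (hW : ∀ c ∈ C, B c ⊆ W) :
    ∑ c ∈ C, #(B c) ≤ #W := by
  classical
  rw [← card_biUnion fun u hu v hv huv => hdisj u v (hC hu hv huv) (hC hv hu huv.symm)]
  exact card_le_card (biUnion_subset.2 hW)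

theorem isAntichain_filter_maximal (T : Finset α) :
    IsAntichain (· ≤ ·) (({c ∈ T | Maximal (· ∈ T) c} : Finset α) : Set α) :=
  (setOfPred_maximal_antichain (· ∈ T)).subset fun _ hc => (mem_filter.1 hc).2

theorem card_eq_sum_card_filter_le_maximal (hB : Monotone B)
    (hdisj : ∀ u v, ¬u ≤ v → ¬v ≤ u → Disjoint (B u) (B v)) {T : Finset α}
    (hT : ∀ u ∈ T, (B u).Nonempty) :
    #T = ∑ c ∈ {c ∈ T | Maximal (· ∈ T) c}, #{u ∈ T | u ≤ c} := by
  rw [← card_biUnion]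
  · congr 1
    ext u
    simp only [mem_biUnion, mem_filter]
    refine ⟨fun hu => ?_, fun ⟨_, _, hu, _⟩ => hu⟩
    obtain ⟨c, huc, hc⟩ := T.exists_le_maximal hu
    exact ⟨c, ⟨hc.1, hc⟩, hu, huc⟩
  · intro c hc c' hc' hne
    simp only [coe_filter, Set.mem_ofPred_eq] at hc hc'
    refine disjoint_left.2 fun u hu hu' => ?_
    simp only [mem_filter] at hu hu'
    rcases le_total_of_le_of_le hB hdisj (hT u hu.1) hu.2 hu'.2 with h | h
    · exact hne (hc.2.eq_of_le hc'.1 h)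
    · exact hne (hc'.2.eq_of_le hc.1 h).symm

/-- The induction step at a root `c` over the forest `D` strictly below it: with a single
maximal child the root gains `k` over it, with two or more the extra roots of `D` pay. -/
theorem mul_card_add_two_le (hB : Monotone B)
    (hdisj : ∀ u v, ¬u ≤ v → ¬v ≤ u → Disjoint (B u) (B v)) (hk : 0 < k)
    {D : Finset α} {c : α} (hc : k ≤ #(B c)) (hD : ∀ d ∈ D, d ≤ c)
    (hgap : ∀ d ∈ D, #(B d) + k ≤ #(B c))
    (hforest : k * (#D + #{d ∈ D | Maximal (· ∈ D) d}) ≤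
      2 * ∑ d ∈ {d ∈ D | Maximal (· ∈ D) d}, #(B d)) :
    k * (#D + 2) ≤ 2 * #(B c) := by
  set M := {d ∈ D | Maximal (· ∈ D) d}
  have hsum : ∑ d ∈ M, #(B d) ≤ #(B c) := sum_card_le_card_of_isAntichain hdisj
    (isAntichain_filter_maximal D) fun d hd => hB (hD d (mem_filter.1 hd).1)
  rcases Nat.lt_or_ge #M 2 with hM | hM
  · rcases Nat.lt_or_ge #M 1 with hM0 | hM1
    · rw [card_eq_zero.1 (by omega : #M = 0), sum_empty, card_empty] at hforest
      have : #D = 0 := by nlinarith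
      rw [this]
      omega
    · obtain ⟨d, hd⟩ := card_eq_one.1 (by omega : #M = 1)
      have hdD : d ∈ D := (mem_filter.1 (hd ▸ mem_singleton_self d : d ∈ M)).1
      rw [hd, sum_singleton, card_singleton] at hforest
      nlinarith [hgap d hdD]
  · calc k * (#D + 2) ≤ k * (#D + #M) := by gcongr
      _ ≤ 2 * ∑ d ∈ M, #(B d) := hforest
      _ ≤ 2 * #(B c) := by gcongr

theorem mul_card_add_card_maximal_le (hB : Monotone B)
    (hdisj : ∀ u v, ¬u ≤ v → ¬v ≤ u → Disjoint (B u) (B v)) (hk : 0 < k) (T : Finset α)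
    (hmass : ∀ u ∈ T, k ≤ #(B u)) (hgap : ∀ u ∈ T, ∀ v ∈ T, u < v → #(B u) + k ≤ #(B v)) :
    k * (#T + #{c ∈ T | Maximal (· ∈ T) c}) ≤
      2 * ∑ c ∈ {c ∈ T | Maximal (· ∈ T) c}, #(B c) := by
  induction T using Finset.strongInduction with
  | H T ih =>
  have hne : ∀ u ∈ T, (B u).Nonempty := fun u hu => card_pos.1 (hk.trans_le (hmass u hu))
  rw [card_eq_sum_card_filter_le_maximal hB hdisj hne, card_eq_sum_ones, ← sum_add_distrib,
    mul_sum, mul_sum]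
  refine sum_le_sum fun c hc => ?_
  have hcT : c ∈ T := (mem_filter.1 hc).1
  set D := {u ∈ T | u ≤ c}.erase c
  have hlt : ∀ d ∈ D, d < c := fun d hd => lt_of_le_of_ne (mem_filter.1 (mem_of_mem_erase hd)).2
    (ne_of_mem_erase hd)
  have hDT : D ⊆ T := (erase_subset _ _).trans (filter_subset _ _)
  have hDssT : D ⊂ T := (ssubset_iff_of_subset hDT).2 ⟨c, hcT, notMem_erase c _⟩
  rw [← card_erase_add_one (mem_filter.2 ⟨hcT, le_rfl⟩ : c ∈ {u ∈ T | u ≤ c})]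
  exact mul_card_add_two_le hB hdisj hk (hmass c hcT) (fun d hd => (hlt d hd).le)
    (fun d hd => hgap d (hDT hd) c hcT (hlt d hd))
    (ih D hDssT (fun u hu => hmass u (hDT hu)) fun u hu v hv => hgap u (hDT hu) v (hDT hv))

theorem mul_card_add_one_le (hB : Monotone B)
    (hdisj : ∀ u v, ¬u ≤ v → ¬v ≤ u → Disjoint (B u) (B v)) (hk : 0 < k) {T : Finset α}
    (hT : T.Nonempty) (hmass : ∀ u ∈ T, k ≤ #(B u))
    (hgap : ∀ u ∈ T, ∀ v ∈ T, u < v → #(B u) + k ≤ #(B v)) {W : Finset β}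
    (hW : ∀ u ∈ T, B u ⊆ W) :
    k * (#T + 1) ≤ 2 * #W := by
  obtain ⟨c, hc⟩ := T.exists_maximal hT
  calc k * (#T + 1) ≤ k * (#T + #{c ∈ T | Maximal (· ∈ T) c}) := by
        gcongr
        exact one_le_card.2 ⟨c, mem_filter.2 ⟨hc.1, hc⟩⟩
    _ ≤ 2 * ∑ c ∈ {c ∈ T | Maximal (· ∈ T) c}, #(B c) :=
        mul_card_add_card_maximal_le hB hdisj hk T hmass hgap
    _ ≤ 2 * #W := by
        gcongr
        exact sum_card_le_card_of_isAntichain hdisj (isAntichain_filter_maximal T)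
          fun c hc => hW c (mem_filter.1 hc).1

end Forest

theorem mul_card_add_one_le_of_isSupported {σ : V → V} {A : Set V} {k r : ℕ}
    (hσ : ∀ v : V, ∀ n : ℕ, 1 ≤ n → σ^[n] v ≠ v) (hA : A.Finite) (hk : 0 < k) {T : Finset V}
    (hT : T.Nonempty) (hsupp : ∀ u ∈ T, IsSupported σ A k r u)
    (hsparse : ∀ u ∈ T, ∀ v ∈ T, ∀ j, σ^[j] u = v → j ≠ 0 → r ≤ j) :
    k * (#T + 1) ≤ 2 * A.ncard := by
  let := descendantOrder σ hσ
  have hfin (u : V) : (DescSet σ A u).Finite := hA.subset fun _ ha => ha.1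
  have hcard (u : V) : #(hfin u).toFinset = (DescSet σ A u).ncard :=
    (Set.ncard_eq_toFinset_card _ _).symm
  rw [Set.ncard_eq_toFinset_card A hA]
  refine mul_card_add_one_le (B := fun u => (hfin u).toFinset)
    (fun u v huv => Set.Finite.toFinset_subset_toFinset.2 (descSet_mono hσ huv))
    (fun u v huv hvu => Set.Finite.disjoint_toFinset.2 (disjoint_descSet huv hvu)) hk hT
    (fun u hu => hcard u ▸ (hsupp u hu).le_ncard_descSet) ?_
    fun u _ => Set.Finite.toFinset_subset_toFinset.2 fun _ ha => ha.1
  intro u hu v hv huv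
  obtain ⟨⟨j, hj⟩, hne⟩ := lt_iff_le_and_ne.1 huv
  have hj0 : j ≠ 0 := by rintro rfl; exact hne hj
  simp only [hcard]
  exact (hsupp v hv).ncard_descSet_add_le hσ hA hj (hsparse u hu v hv j hj hj0)

theorem supported_count_general (G : SimpleGraph V) (σ : V → V) (hσ : IsEndOrientation G σ)
    (A : Set V) (k r : ℕ) (hk : 1 ≤ k) (hr : 1 ≤ r) (hkA : k ≤ A.ncard) :
    ∀ S : Finset V, (∀ u ∈ S, IsSupported σ A k r u) →
      (S.card : ℝ) ≤ r * (2 * A.ncard - k) / k := by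
  intro S hS
  have hA : A.Finite := Set.finite_of_ncard_pos (by omega)
  obtain ⟨d, hd⟩ := exists_depth hσ.2.1 hσ.2.2 S
  have hclass : ∀ c ∈ range r, k * #{u ∈ S | d u % r = c} + k ≤ 2 * A.ncard := by
    intro c _
    rcases eq_empty_or_nonempty {u ∈ S | d u % r = c} with h | h
    · rw [h, card_empty]
      omega
    refine mul_card_add_one_le_of_isSupported hσ.2.1 hA hk h
      (fun u hu => hS u (mem_filter.1 hu).1) fun u hu v hv j huv hj => ?_
    simp only [mem_filter] at hu hv
    have hmod : d v + j ≡ d v + 0 [MOD r] := by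
      rw [← hd u hu.1 v hv.1 j huv, add_zero]
      exact hu.2.trans hv.2.symm
    exact Nat.le_of_dvd (by omega) (Nat.modEq_zero_iff_dvd.1 (hmod.add_left_cancel' _))
  have hsum : k * #S + k * r ≤ r * (2 * A.ncard) :=
    calc k * #S + k * r = ∑ c ∈ range r, (k * #{u ∈ S | d u % r = c} + k) := by
          rw [card_eq_sum_card_fiberwise fun u _ => mem_range.2 (Nat.mod_lt _ hr),
            sum_add_distrib, mul_sum, sum_const, card_range, smul_eq_mul, mul_comm r k]
      _ ≤ ∑ c ∈ range r, 2 * A.ncard := sum_le_sum hclass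
      _ = r * (2 * A.ncard) := by rw [sum_const, card_range, smul_eq_mul]
  rw [le_div_iff₀ (by positivity)]
  have : (k * #S + k * r : ℝ) ≤ r * (2 * A.ncard) := by exact_mod_cast hsum
  linarith

/-- In an infinite locally finite tree with an end-orientation `σ`, for a finite set `A` of
vertices and `k, r ≥ 1` with `k ≤ |A|`, there are at most `r (2|A| - k)/k` vertices that are
`(k,r)`-supported for `A`. -/
theorem supported_count (G : SimpleGraph V) (hT : G.IsTree) (hlf : G.LocallyFinite)
    (hinf : Infinite V) (σ : V → V) (hσ : IsEndOrientation G σ)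
    (A : Set V) (hA : A.Finite) (k r : ℕ) (hk : 1 ≤ k) (hr : 1 ≤ r) (hkA : k ≤ A.ncard) :
    ∀ S : Finset V, (∀ u ∈ S, IsSupported σ A k r u) →
      (S.card : ℝ) ≤ r * (2 * A.ncard - k) / k :=
  supported_count_general G σ hσ A k r hk hr hkA
end

section
/- Let T be an infinite locally finite tree equipped with an end-orientation σ, let A be a finite set of vertices of T, and let k ≥ 1 be an integer with k ≤ |A|. Then the number of vertices of T that are (k,1)-supported for A with respect to σ is at most (2|A| − k)/k. -/
variable {V : Type*}

lemma desc_refl (σ : V → V) (u : V) : IsDescendant σ u u := ⟨0, rfl⟩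

lemma desc_trans (σ : V → V) {x u v : V} (h1 : IsDescendant σ x u)
    (h2 : IsDescendant σ u v) : IsDescendant σ x v := by
  obtain ⟨a, ha⟩ := h1; obtain ⟨b, hb⟩ := h2
  exact ⟨b + a, by rw [Function.iterate_add_apply, ha, hb]⟩

lemma desc_antisymm (σ : V → V) (hσ2 : ∀ v, ∀ n : ℕ, 1 ≤ n → σ^[n] v ≠ v)
    {u v : V} (h1 : IsDescendant σ u v) (h2 : IsDescendant σ v u) : u = v := by
  obtain ⟨a, ha⟩ := h1; obtain ⟨b, hb⟩ := h2
  have h : σ^[b + a] u = u := by rw [Function.iterate_add_apply, ha, hb]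
  rcases Nat.eq_zero_or_pos (b + a) with h0 | h0
  · have ha0 : a = 0 := by omega
    simpa [ha0] using ha
  · exact absurd h (hσ2 u _ h0)

lemma desc_total (σ : V → V) {x u v : V} (h1 : IsDescendant σ x u)
    (h2 : IsDescendant σ x v) : IsDescendant σ u v ∨ IsDescendant σ v u := by
  obtain ⟨a, ha⟩ := h1; obtain ⟨b, hb⟩ := h2
  rcases le_total a b with h | h
  · exact Or.inl ⟨b - a, by
      rw [← ha, ← Function.iterate_add_apply, Nat.sub_add_cancel h, hb]⟩
  · exact Or.inr ⟨a - b, by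
      rw [← hb, ← Function.iterate_add_apply, Nat.sub_add_cancel h, ha]⟩

lemma exists_maximal_cover [DecidableEq V] (σ : V → V)
    (hσ2 : ∀ v, ∀ n : ℕ, 1 ≤ n → σ^[n] v ≠ v) (T : Finset V) :
    ∀ x ∈ T, ∃ v ∈ T, IsDescendant σ x v ∧
      ∀ y ∈ T, IsDescendant σ v y → y = v := by
  classical
  intro x hx
  set Tx := T.filter (fun y => IsDescendant σ x y) with hTx
  have hTxne : Tx.Nonempty := ⟨x, by simp [hTx, hx, desc_refl]⟩
  obtain ⟨v, hvTx, hvmin⟩ := Tx.exists_min_image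
    (fun y => (T.filter (fun z => IsDescendant σ y z)).card) hTxne
  simp only [hTx, Finset.mem_filter] at hvTx
  refine ⟨v, hvTx.1, hvTx.2, fun y hy hvy => ?_⟩
  by_contra hne
  have hsubset : T.filter (fun z => IsDescendant σ y z) ⊆
      T.filter (fun z => IsDescendant σ v z) := by
    intro z hz; simp only [Finset.mem_filter] at hz ⊢
    exact ⟨hz.1, desc_trans σ hvy hz.2⟩
  have hvnot : v ∉ T.filter (fun z => IsDescendant σ y z) := by
    simp only [Finset.mem_filter, not_and]
    intro _ hyv
    exact hne (desc_antisymm σ hσ2 hyv hvy)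
  have hvin : v ∈ T.filter (fun z => IsDescendant σ v z) := by
    simp [hvTx.1, desc_refl]
  have hlt : (T.filter (fun z => IsDescendant σ y z)).card <
      (T.filter (fun z => IsDescendant σ v z)).card :=
    Finset.card_lt_card (Finset.ssubset_iff_subset_ne.mpr
      ⟨hsubset, fun hc => hvnot (hc ▸ hvin)⟩)
  have hymem : y ∈ Tx := by
    simp only [hTx, Finset.mem_filter]
    exact ⟨hy, desc_trans σ hvTx.2 hvy⟩
  have := hvmin y hymem
  omega

/-- In an infinite locally finite tree with an end-orientation `σ`, for a finite set `A` of
vertices and `k ≥ 1` with `k ≤ |A|`, there are at most `(2|A| - k)/k` vertices that are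
`(k,1)`-supported for `A`. -/
theorem supported_count_one (G : SimpleGraph V) (hT : G.IsTree) (hlf : G.LocallyFinite)
    (hinf : Infinite V) (σ : V → V) (hσ : IsEndOrientation G σ)
    (A : Set V) (hA : A.Finite) (k : ℕ) (hk : 1 ≤ k) (hkA : k ≤ A.ncard) :
    ∀ S : Finset V, (∀ u ∈ S, IsSupported σ A k 1 u) →
      (S.card : ℝ) ≤ (2 * A.ncard - k) / k := by
  classical
  obtain ⟨-, hσ2, -⟩ := hσ
  intro S hS
  set A' : Finset V := hA.toFinset with hA'def
  have hA'card : A.ncard = A'.card := by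
    conv_lhs => rw [← hA.coe_toFinset]
    rw [Set.ncard_coe_finset]
  set DF : V → Finset V := fun v => A'.filter (fun a => a ≠ v ∧ IsDescendant σ a v)
    with hDFdef
  have hDFsub : ∀ v, DF v ⊆ A' := fun v => Finset.filter_subset _ _
  have hDFncard : ∀ v, (DescSet σ A v).ncard = (DF v).card := by
    intro v
    have h : DescSet σ A v = ↑(DF v) := by
      ext x
      simp [DescSet, hDFdef, hA'def, Set.Finite.mem_toFinset]
    rw [h, Set.ncard_coe_finset]
  have hsub : ∀ u v : V, IsDescendant σ u v → u ≠ v → DF u ⊆ DF v := by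
    intro u v hd hne x hx
    simp only [hDFdef, Finset.mem_filter] at hx ⊢
    obtain ⟨hxA, hxu, hxd⟩ := hx
    refine ⟨hxA, ?_, desc_trans σ hxd hd⟩
    rintro rfl
    exact hne (desc_antisymm σ hσ2 hd hxd)
  have hF1 : ∀ u, IsSupported σ A k 1 u → k ≤ (DF u).card := by
    rintro u ⟨⟨w, hw⟩, hall⟩
    have h := hall w hw
    rw [hDFncard, hDFncard] at h
    omega
  have hF2 : ∀ u v : V, IsSupported σ A k 1 v → IsDescendant σ u v → u ≠ v →
      (DF u).card + k ≤ (DF v).card := by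
    intro u v hv hd hne
    obtain ⟨j, hj⟩ := hd
    have hj1 : 1 ≤ j := by
      rcases Nat.eq_zero_or_pos j with h | h
      · exact absurd (by simpa [h] using hj) hne
      · exact h
    have hw : σ^[1] (σ^[j-1] u) = v := by
      rw [← Function.iterate_add_apply, show 1 + (j-1) = j by omega]
      exact hj
    have hle : (DF u).card ≤ (DF (σ^[j-1] u)).card := by
      rcases eq_or_ne u (σ^[j-1] u) with heq | hne2
      · rw [← heq]
      · exact Finset.card_le_card (hsub u _ ⟨j-1, rfl⟩ hne2)
    have h := hv.2 _ hw
    rw [hDFncard, hDFncard] at h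
    omega
  -- the key induction: for a finset of supported proper descendants of a supported u
  have key : ∀ n : ℕ, ∀ T : Finset V, T.card ≤ n →
      (∀ x ∈ T, IsSupported σ A k 1 x) → ∀ u, IsSupported σ A k 1 u →
      (∀ x ∈ T, IsDescendant σ x u ∧ x ≠ u) →
      k * T.card + 2 * k ≤ 2 * (DF u).card := by
    intro n
    induction n with
    | zero =>
      intro T hTc _ u hu _
      have hTe : T = ∅ := Finset.card_eq_zero.mp (Nat.le_zero.mp hTc)
      subst hTe
      have := hF1 u hu
      simp only [Finset.card_empty, Nat.mul_zero, Nat.zero_add]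
      omega
    | succ n ih =>
      intro T hTcard hTsup u hu hTdesc
      rcases Finset.eq_empty_or_nonempty T with rfl | hTne
      · have := hF1 u hu
        simp only [Finset.card_empty, Nat.mul_zero, Nat.zero_add]
        omega
      set M := T.filter (fun v => ∀ y ∈ T, IsDescendant σ v y → y = v) with hM
      set D := fun v => T.filter (fun x => IsDescendant σ x v) with hD
      have hMsubT : M ⊆ T := Finset.filter_subset _ _
      have hMmax : ∀ v ∈ M, ∀ y ∈ T, IsDescendant σ v y → y = v := by
        intro v hv
        exact (Finset.mem_filter.mp hv).2
      have hcover : ∀ x ∈ T, ∃ v ∈ M, IsDescendant σ x v := by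
        intro x hx
        obtain ⟨v, hvT, hxv, hvmax⟩ := exists_maximal_cover σ hσ2 T x hx
        exact ⟨v, Finset.mem_filter.mpr ⟨hvT, hvmax⟩, hxv⟩
      have hDdisj : ∀ v ∈ M, ∀ w ∈ M, v ≠ w → Disjoint (D v) (D w) := by
        intro v hv w hw hne
        rw [Finset.disjoint_left]
        intro x hxv hxw
        simp only [hD, Finset.mem_filter] at hxv hxw
        rcases desc_total σ hxv.2 hxw.2 with h | h
        · exact hne (hMmax v hv w (hMsubT hw) h).symm
        · exact hne (hMmax w hw v (hMsubT hv) h)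
      have hbiU : M.biUnion D = T := by
        apply Finset.Subset.antisymm
        · intro x hx
          obtain ⟨v, _, hxv⟩ := Finset.mem_biUnion.mp hx
          exact (Finset.mem_filter.mp hxv).1
        · intro x hx
          obtain ⟨v, hv, hxv⟩ := hcover x hx
          exact Finset.mem_biUnion.mpr ⟨v, hv, Finset.mem_filter.mpr ⟨hx, hxv⟩⟩
      have hcardsum : T.card = ∑ v ∈ M, (D v).card := by
        rw [← hbiU, Finset.card_biUnion hDdisj]
      have hper : ∀ v ∈ M, k * (D v).card + k ≤ 2 * (DF v).card := by
        intro v hv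
        have hvT : v ∈ T := hMsubT hv
        have hvD : v ∈ D v := Finset.mem_filter.mpr ⟨hvT, desc_refl σ v⟩
        have hDsubT : D v ⊆ T := Finset.filter_subset _ _
        have hpos : 1 ≤ (D v).card := Finset.card_pos.mpr ⟨v, hvD⟩
        have hcarde : ((D v).erase v).card = (D v).card - 1 :=
          Finset.card_erase_of_mem hvD
        have h1 : ((D v).erase v).card ≤ n := by
          have := Finset.card_le_card hDsubT
          omega
        have hdesc : ∀ x ∈ (D v).erase v, IsDescendant σ x v ∧ x ≠ v := by
          intro x hx
          exact ⟨(Finset.mem_filter.mp (Finset.mem_of_mem_erase hx)).2,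
            Finset.ne_of_mem_erase hx⟩
        have hres := ih ((D v).erase v) h1
          (fun x hx => hTsup x (hDsubT (Finset.mem_of_mem_erase hx)))
          v (hTsup v hvT) hdesc
        rw [hcarde] at hres
        obtain ⟨m, hm⟩ : ∃ m, (D v).card = m + 1 := ⟨(D v).card - 1, by omega⟩
        rw [hm] at hres ⊢
        simp only [Nat.add_sub_cancel] at hres
        have he : k * (m + 1) + k = k * m + 2 * k := by ring
        omega
      -- case on number of maximal elements
      rcases Nat.lt_or_ge M.card 2 with hMc | hMc
      · -- M.card ≤ 1; M nonempty since T nonempty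
        obtain ⟨x, hx⟩ := hTne
        obtain ⟨v, hvM, _⟩ := hcover x hx
        have hM1 : M = {v} := by
          apply Finset.eq_singleton_iff_unique_mem.mpr
          refine ⟨hvM, fun w hw => ?_⟩
          by_contra hne
          have : 2 ≤ M.card := Finset.one_lt_card.mpr ⟨w, hw, v, hvM, hne⟩
          omega
        have hTD : T.card = (D v).card := by
          rw [hcardsum, hM1, Finset.sum_singleton]
        have h1 := hper v hvM
        have hd := hTdesc v (hMsubT hvM)
        have h2 := hF2 v u hu hd.1 hd.2
        rw [hTD]
        set a := k * (D v).card
        omega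
      · have hDFdisj : ∀ v ∈ M, ∀ w ∈ M, v ≠ w → Disjoint (DF v) (DF w) := by
          intro v hv w hw hne
          rw [Finset.disjoint_left]
          intro x hxv hxw
          simp only [hDFdef, Finset.mem_filter] at hxv hxw
          rcases desc_total σ hxv.2.2 hxw.2.2 with h | h
          · exact hne (hMmax v hv w (hMsubT hw) h).symm
          · exact hne (hMmax w hw v (hMsubT hv) h)
        have hUsub : M.biUnion DF ⊆ DF u := by
          intro x hx
          obtain ⟨v, hv, hxv⟩ := Finset.mem_biUnion.mp hx
          have hd := hTdesc v (hMsubT hv)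
          exact hsub v u hd.1 hd.2 hxv
        have hcard2 : ∑ v ∈ M, (DF v).card ≤ (DF u).card := by
          rw [← Finset.card_biUnion hDFdisj]
          exact Finset.card_le_card hUsub
        have hsum : ∑ v ∈ M, (k * (D v).card + k) ≤ ∑ v ∈ M, 2 * (DF v).card :=
          Finset.sum_le_sum hper
        have hexp : ∑ v ∈ M, (k * (D v).card + k) = k * T.card + M.card * k := by
          rw [Finset.sum_add_distrib, Finset.sum_const, ← Finset.mul_sum, ← hcardsum,
            smul_eq_mul]
        calc k * T.card + 2 * k ≤ k * T.card + M.card * k :=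
              Nat.add_le_add_left (Nat.mul_le_mul_right k hMc) _
          _ = ∑ v ∈ M, (k * (D v).card + k) := hexp.symm
          _ ≤ ∑ v ∈ M, 2 * (DF v).card := hsum
          _ = 2 * ∑ v ∈ M, (DF v).card := by rw [Finset.mul_sum]
          _ ≤ 2 * (DF u).card := Nat.mul_le_mul_left 2 hcard2
  -- top level
  have main : k * S.card + k ≤ 2 * A'.card := by
    set M := S.filter (fun v => ∀ y ∈ S, IsDescendant σ v y → y = v) with hM
    set D := fun v => S.filter (fun x => IsDescendant σ x v) with hD
    have hMsubT : M ⊆ S := Finset.filter_subset _ _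
    have hMmax : ∀ v ∈ M, ∀ y ∈ S, IsDescendant σ v y → y = v := by
      intro v hv
      exact (Finset.mem_filter.mp hv).2
    have hcover : ∀ x ∈ S, ∃ v ∈ M, IsDescendant σ x v := by
      intro x hx
      obtain ⟨v, hvT, hxv, hvmax⟩ := exists_maximal_cover σ hσ2 S x hx
      exact ⟨v, Finset.mem_filter.mpr ⟨hvT, hvmax⟩, hxv⟩
    have hDdisj : ∀ v ∈ M, ∀ w ∈ M, v ≠ w → Disjoint (D v) (D w) := by
      intro v hv w hw hne
      rw [Finset.disjoint_left]
      intro x hxv hxw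
      simp only [hD, Finset.mem_filter] at hxv hxw
      rcases desc_total σ hxv.2 hxw.2 with h | h
      · exact hne (hMmax v hv w (hMsubT hw) h).symm
      · exact hne (hMmax w hw v (hMsubT hv) h)
    have hbiU : M.biUnion D = S := by
      apply Finset.Subset.antisymm
      · intro x hx
        obtain ⟨v, _, hxv⟩ := Finset.mem_biUnion.mp hx
        exact (Finset.mem_filter.mp hxv).1
      · intro x hx
        obtain ⟨v, hv, hxv⟩ := hcover x hx
        exact Finset.mem_biUnion.mpr ⟨v, hv, Finset.mem_filter.mpr ⟨hx, hxv⟩⟩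
    have hcardsum : S.card = ∑ v ∈ M, (D v).card := by
      rw [← hbiU, Finset.card_biUnion hDdisj]
    have hper : ∀ v ∈ M, k * (D v).card + k ≤ 2 * (DF v).card := by
      intro v hv
      have hvT : v ∈ S := hMsubT hv
      have hvD : v ∈ D v := Finset.mem_filter.mpr ⟨hvT, desc_refl σ v⟩
      have hDsubT : D v ⊆ S := Finset.filter_subset _ _
      have hpos : 1 ≤ (D v).card := Finset.card_pos.mpr ⟨v, hvD⟩
      have hcarde : ((D v).erase v).card = (D v).card - 1 :=
        Finset.card_erase_of_mem hvD
      have hdesc : ∀ x ∈ (D v).erase v, IsDescendant σ x v ∧ x ≠ v := by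
        intro x hx
        exact ⟨(Finset.mem_filter.mp (Finset.mem_of_mem_erase hx)).2,
          Finset.ne_of_mem_erase hx⟩
      have hres := key S.card ((D v).erase v)
        (by have := Finset.card_le_card hDsubT; omega)
        (fun x hx => hS x (hDsubT (Finset.mem_of_mem_erase hx)))
        v (hS v hvT) hdesc
      rw [hcarde] at hres
      obtain ⟨m, hm⟩ : ∃ m, (D v).card = m + 1 := ⟨(D v).card - 1, by omega⟩
      rw [hm] at hres ⊢
      simp only [Nat.add_sub_cancel] at hres
      have he : k * (m + 1) + k = k * m + 2 * k := by ring
      omega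
    rcases Finset.eq_empty_or_nonempty M with hMe | hMne
    · have hSe : S = ∅ := by rw [← hbiU, hMe]; simp
      rw [hSe]
      simp only [Finset.card_empty, Nat.mul_zero, Nat.zero_add]
      rw [hA'card] at hkA
      omega
    · have hDFdisj : ∀ v ∈ M, ∀ w ∈ M, v ≠ w → Disjoint (DF v) (DF w) := by
        intro v hv w hw hne
        rw [Finset.disjoint_left]
        intro x hxv hxw
        simp only [hDFdef, Finset.mem_filter] at hxv hxw
        rcases desc_total σ hxv.2.2 hxw.2.2 with h | h
        · exact hne (hMmax v hv w (hMsubT hw) h).symm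
        · exact hne (hMmax w hw v (hMsubT hv) h)
      have hcard2 : ∑ v ∈ M, (DF v).card ≤ A'.card := by
        rw [← Finset.card_biUnion hDFdisj]
        exact Finset.card_le_card (fun x hx => by
          obtain ⟨v, _, hxv⟩ := Finset.mem_biUnion.mp hx
          exact hDFsub v hxv)
      have hsum : ∑ v ∈ M, (k * (D v).card + k) ≤ ∑ v ∈ M, 2 * (DF v).card :=
        Finset.sum_le_sum hper
      have hexp : ∑ v ∈ M, (k * (D v).card + k) = k * S.card + M.card * k := by
        rw [Finset.sum_add_distrib, Finset.sum_const, ← Finset.mul_sum, ← hcardsum,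
          smul_eq_mul]
      have hM1 : 1 ≤ M.card := Finset.card_pos.mpr hMne
      calc k * S.card + k ≤ k * S.card + M.card * k := by
            have : 1 * k ≤ M.card * k := Nat.mul_le_mul_right k hM1
            omega
        _ = ∑ v ∈ M, (k * (D v).card + k) := hexp.symm
        _ ≤ ∑ v ∈ M, 2 * (DF v).card := hsum
        _ = 2 * ∑ v ∈ M, (DF v).card := by rw [Finset.mul_sum]
        _ ≤ 2 * A'.card := Nat.mul_le_mul_left 2 hcard2
  -- convert to reals
  have hkpos : (0 : ℝ) < (k : ℝ) := by exact_mod_cast hk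
  rw [le_div_iff₀ hkpos]
  rw [hA'card]
  have : (k : ℝ) * S.card + k ≤ 2 * A'.card := by exact_mod_cast main
  nlinarith [this]
end

section
/- Let T be an infinite locally finite tree equipped with an end-orientation σ, let A be a finite set of vertices of T, and let k ≥ 1 be an integer. If a vertex u of T has at least one child and satisfies |A_u| − |A_w| ≥ k for every child w of u, then min(|A_u|, k/2) ≤ Σ_{w a child of u} (1[w ∈ A] + min(|A_w|, k/2)) − k/2, where the (finite) sum is over all children w of u and 1[w ∈ A] equals 1 if w ∈ A and 0 otherwise. -/
variable {V : Type*}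

/-- If a vertex `u` of an infinite locally finite tree with end-orientation `σ` has at least one
child and satisfies `|A_u| - |A_w| ≥ k` for every child `w` of `u`, then
`min(|A_u|, k/2) ≤ Σ_{w a child of u} (1[w ∈ A] + min(|A_w|, k/2)) - k/2`,
where the sum runs over the children of `u`, i.e. the vertices `w` with `σ w = u`. -/
theorem supported_child_sum_inequality (G : SimpleGraph V) (hT : G.IsTree)
    (hlf : G.LocallyFinite) (hinf : Infinite V) (σ : V → V) (hσ : IsEndOrientation G σ)
    (A : Set V) (hA : A.Finite) (k : ℕ) (hk : 1 ≤ k) (u : V)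
    (hchild : ∃ w, σ w = u)
    (hsup : ∀ w, σ w = u →
      (k : ℤ) ≤ ((DescSet σ A u).ncard : ℤ) - ((DescSet σ A w).ncard : ℤ)) :
    min ((DescSet σ A u).ncard : ℝ) ((k : ℝ) / 2) ≤
      (∑ᶠ w ∈ {w : V | σ w = u},
          (A.indicator (fun _ => (1 : ℝ)) w + min ((DescSet σ A w).ncard : ℝ) ((k : ℝ) / 2)))
        - (k : ℝ) / 2 := by
  classical
  obtain ⟨hadj, hno, -⟩ := hσ
  have hCfin : ({w : V | σ w = u} : Set V).Finite := by
    apply Set.Finite.subset (G.neighborFinset u).finite_toSet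
    intro w hw
    simp only [Set.mem_setOf_eq] at hw
    rw [Finset.mem_coe, SimpleGraph.mem_neighborFinset]
    have := hadj w
    rw [hw] at this
    exact this.symm
  set s : Finset V := hCfin.toFinset with hs_def
  have hmem_s : ∀ w, w ∈ s ↔ σ w = u := by
    intro w; simp [hs_def, Set.Finite.mem_toFinset]
  -- finiteness of DescSets
  have hfin : ∀ v, (DescSet σ A v).Finite := fun v => hA.subset (fun a ha => ha.1)
  -- coverage lemma
  have hcover : ∀ a ∈ DescSet σ A u, ∃ w, σ w = u ∧ ((a = w ∧ a ∈ A) ∨ a ∈ DescSet σ A w) := by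
    rintro a ⟨haA, hau, j, hj⟩
    have hj0 : j ≠ 0 := by rintro rfl; exact hau hj
    obtain ⟨i, rfl⟩ := Nat.exists_eq_succ_of_ne_zero hj0
    refine ⟨σ^[i] a, ?_, ?_⟩
    · rw [← Function.iterate_succ_apply' σ i a]; exact hj
    · by_cases hwa : a = σ^[i] a
      · exact Or.inl ⟨hwa, haA⟩
      · exact Or.inr ⟨haA, hwa, i, rfl⟩
  -- Fact 1 : |A_u| ≤ ∑ (1[w∈A] + |A_w|) over children (in ℕ)
  have fact1 : (DescSet σ A u).ncard ≤
      ∑ w ∈ s, ((if w ∈ A then 1 else 0) + (DescSet σ A w).ncard) := by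
    have hsub : DescSet σ A u ⊆ ⋃ w ∈ s, ((A ∩ {w}) ∪ DescSet σ A w) := by
      intro a ha
      obtain ⟨w, hw, hcase⟩ := hcover a ha
      refine Set.mem_biUnion ((hmem_s w).2 hw) ?_
      rcases hcase with ⟨rfl, haA⟩ | h
      · exact Or.inl ⟨haA, rfl⟩
      · exact Or.inr h
    have hUfin : (⋃ w ∈ s, ((A ∩ {w}) ∪ DescSet σ A w)).Finite :=
      Set.Finite.biUnion s.finite_toSet
        (fun w _ => (hA.inter_of_left _).union (hfin w))
    calc (DescSet σ A u).ncard ≤ (⋃ w ∈ s, ((A ∩ {w}) ∪ DescSet σ A w)).ncard :=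
          Set.ncard_le_ncard hsub hUfin
      _ ≤ ∑ w ∈ s, ((A ∩ {w}) ∪ DescSet σ A w).ncard := by
          classical
          induction s using Finset.induction with
          | empty => simp
          | @insert x t hx ih =>
            rw [Finset.sum_insert hx]
            simp only [Finset.mem_insert, Set.iUnion_iUnion_eq_or_left]
            refine le_trans (Set.ncard_union_le _ _) ?_
            exact Nat.add_le_add_left ih _
      _ ≤ ∑ w ∈ s, ((if w ∈ A then 1 else 0) + (DescSet σ A w).ncard) := by
          apply Finset.sum_le_sum
          intro w _
          by_cases hwA : w ∈ A
          · rw [if_pos hwA]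
            have h1 : (A ∩ {w}) ∪ DescSet σ A w ⊆ insert w (DescSet σ A w) := by
              rintro x (⟨-, rfl⟩ | hx)
              · exact Set.mem_insert _ _
              · exact Set.mem_insert_of_mem _ hx
            calc ((A ∩ {w}) ∪ DescSet σ A w).ncard ≤ (insert w (DescSet σ A w)).ncard :=
                Set.ncard_le_ncard h1 ((hfin w).insert w)
              _ ≤ 1 + (DescSet σ A w).ncard := by
                  rw [add_comm]; exact Set.ncard_insert_le _ _
          · rw [if_neg hwA]
            have h1 : (A ∩ {w}) = ∅ := by
              ext x; simp only [Set.mem_inter_iff, Set.mem_singleton_iff, Set.mem_empty_iff_false,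
                iff_false]
              rintro ⟨hx, rfl⟩; exact hwA hx
            rw [h1, Set.empty_union, zero_add]
  -- notation
  set c : ℝ := (k : ℝ) / 2 with hc
  set au : ℝ := ((DescSet σ A u).ncard : ℝ) with hau
  have hc_pos : 0 < c := by positivity
  -- hsup in ℝ
  have hsupR : ∀ w ∈ s, ((DescSet σ A w).ncard : ℝ) + (k : ℝ) ≤ au := by
    intro w hw
    have h2 := hsup w ((hmem_s w).1 hw)
    have h3 : (DescSet σ A w).ncard + k ≤ (DescSet σ A u).ncard := by omega
    rw [hau]
    exact_mod_cast h3
  -- k ≤ au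
  obtain ⟨w0, hw0⟩ := hchild
  have hw0s : w0 ∈ s := (hmem_s w0).2 hw0
  have hau_k : (k : ℝ) ≤ au := by
    have := hsupR w0 hw0s
    have : (0:ℝ) ≤ ((DescSet σ A w0).ncard : ℝ) := by positivity
    linarith [hsupR w0 hw0s]
  -- rewrite finsum as finset sum
  rw [finsum_mem_eq_finite_toFinset_sum _ hCfin]
  -- LHS min = c
  have hmin : min au c = c := min_eq_right (by linarith)
  rw [hmin, le_sub_iff_add_le]
  have h2c : c + c = (k : ℝ) + (c + c) - (k:ℝ) := by ring
  -- abbreviations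
  set f : V → ℝ := fun w => A.indicator (fun _ => (1 : ℝ)) w + min ((DescSet σ A w).ncard : ℝ) c
    with hf_def
  have hf_nonneg : ∀ w, 0 ≤ f w := by
    intro w
    apply add_nonneg
    · exact Set.indicator_nonneg (fun _ _ => zero_le_one) w
    · exact le_min (by positivity) hc_pos.le
  have hind : ∀ w, A.indicator (fun _ => (1 : ℝ)) w = if w ∈ A then 1 else 0 := by
    intro w; simp [Set.indicator_apply]
  -- fact1 in ℝ
  have fact1R : au ≤ ∑ w ∈ s, ((if w ∈ A then (1:ℝ) else 0) + ((DescSet σ A w).ncard : ℝ)) := by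
    rw [hau]
    calc ((DescSet σ A u).ncard : ℝ) ≤
        ((∑ w ∈ s, ((if w ∈ A then 1 else 0) + (DescSet σ A w).ncard) : ℕ) : ℝ) := by
          exact_mod_cast fact1
      _ = _ := by
          push_cast
          apply Finset.sum_congr rfl
          intro w _
          split <;> simp
  show c + c ≤ ∑ w ∈ s, f w
  by_cases hbig : ∃ w ∈ s, c < ((DescSet σ A w).ncard : ℝ)
  · obtain ⟨w₁, hw₁s, hw₁⟩ := hbig
    have hfw₁ : c ≤ f w₁ := by
      have : min ((DescSet σ A w₁).ncard : ℝ) c = c := min_eq_right hw₁.le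
      rw [hf_def]
      simp only [this]
      have := Set.indicator_nonneg (s := A) (f := fun _ => (1:ℝ)) (fun _ _ => zero_le_one) w₁
      linarith
    rw [← Finset.add_sum_erase _ f hw₁s]
    by_cases hbig2 : ∃ w ∈ s.erase w₁, c < ((DescSet σ A w).ncard : ℝ)
    · obtain ⟨w₂, hw₂s, hw₂⟩ := hbig2
      have hfw₂ : c ≤ f w₂ := by
        have : min ((DescSet σ A w₂).ncard : ℝ) c = c := min_eq_right hw₂.le
        rw [hf_def]
        simp only [this]
        have := Set.indicator_nonneg (s := A) (f := fun _ => (1:ℝ)) (fun _ _ => zero_le_one) w₂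
        linarith
      have : c ≤ ∑ w ∈ s.erase w₁, f w :=
        le_trans hfw₂ (Finset.single_le_sum (fun w _ => hf_nonneg w) hw₂s)
      linarith
    · -- all other children small
      push_neg at hbig2
      have heq : ∑ w ∈ s.erase w₁, f w =
          ∑ w ∈ s.erase w₁, ((if w ∈ A then (1:ℝ) else 0) + ((DescSet σ A w).ncard : ℝ)) := by
        apply Finset.sum_congr rfl
        intro w hw
        rw [hf_def]
        simp only [hind w, min_eq_left (hbig2 w hw)]
      have hsplit : ∑ w ∈ s, ((if w ∈ A then (1:ℝ) else 0) + ((DescSet σ A w).ncard : ℝ)) =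
          ((if w₁ ∈ A then (1:ℝ) else 0) + ((DescSet σ A w₁).ncard : ℝ)) +
          ∑ w ∈ s.erase w₁, ((if w ∈ A then (1:ℝ) else 0) + ((DescSet σ A w).ncard : ℝ)) :=
        (Finset.add_sum_erase _ _ hw₁s).symm
      have hfw₁' : f w₁ = (if w₁ ∈ A then (1:ℝ) else 0) + c := by
        rw [hf_def]
        simp only [hind w₁, min_eq_right hw₁.le]
      have hkey := hsupR w₁ hw₁s
      have h2c' : (k:ℝ) = c + c := by rw [hc]; ring
      rw [heq, hfw₁']
      have herase : au - ((if w₁ ∈ A then (1:ℝ) else 0) + ((DescSet σ A w₁).ncard : ℝ)) ≤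
          ∑ w ∈ s.erase w₁, ((if w ∈ A then (1:ℝ) else 0) + ((DescSet σ A w).ncard : ℝ)) := by
        rw [hsplit] at fact1R; linarith
      have hw1a : (0:ℝ) ≤ if w₁ ∈ A then (1:ℝ) else 0 := by positivity
      linarith
  · -- all children small
    push_neg at hbig
    have heq : ∑ w ∈ s, f w =
        ∑ w ∈ s, ((if w ∈ A then (1:ℝ) else 0) + ((DescSet σ A w).ncard : ℝ)) := by
      apply Finset.sum_congr rfl
      intro w hw
      rw [hf_def]
      simp only [hind w, min_eq_left (hbig w hw)]
    have h2c' : (k:ℝ) = c + c := by rw [hc]; ring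
    rw [heq]
    linarith
end

section
/- Let T be a locally finite tree, let A be a set of vertices of T, let r ≥ 1 be an integer, and suppose that v is a vertex of T such that deleting v from T leaves at least three connected components each containing infinitely many elements of A. Let o be a vertex of T at graph distance d(o,v) < r from v. Then: (a) there exist at least two distinct vertices of T at distance exactly r from o; and (b) for every pair of (not necessarily distinct) vertices v', w' each at distance exactly r from o, the set A ∖ (A_{o,v'} ∪ A_{o,w'}) is infinite. In particular, o is (k,r)-branching for A for every integer k ≥ 1. -/
variable {V : Type*}

/-- The unique simple path from `u` to `a` passes through `v` (in a tree, every simple path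
from `u` to `a` contains `v` in its support). -/
def PassesThrough (G : SimpleGraph V) (u a v : V) : Prop :=
  ∀ p : G.Walk u a, p.IsPath → v ∈ p.support

/-- `A_{u,v}`: the set of vertices `a ∈ A \ {v}` such that the unique simple path
from `u` to `a` passes through `v`. -/
def BranchSet (G : SimpleGraph V) (A : Set V) (u v : V) : Set V :=
  {a | a ∈ A ∧ a ≠ v ∧ PassesThrough G u a v}

/-- A vertex `u` is `(k,r)`-branching for `A` if there are at least two distinct vertices at
distance exactly `r` from `u`, and `|A \ (A_{u,v} ∪ A_{u,w})| ≥ k` for every pair of vertices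
`v, w` at distance exactly `r` from `u`. -/
def IsBranching (G : SimpleGraph V) (A : Set V) (k r : ℕ) (u : V) : Prop :=
  (∃ v w : V, v ≠ w ∧ G.dist u v = r ∧ G.dist u w = r) ∧
    ∀ v w : V, G.dist u v = r → G.dist u w = r →
      (k : ℕ∞) ≤ (A \ (BranchSet G A u v ∪ BranchSet G A u w)).encard

/-- The connected component `C` of the graph obtained from `G` by deleting the vertex set `S`
contains infinitely many elements of `A`. -/
def CompInfinite (G : SimpleGraph V) (S A : Set V) (C : (G.induce Sᶜ).ConnectedComponent) :
    Prop :=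
  {x : ↥Sᶜ | (G.induce Sᶜ).connectedComponentMk x = C ∧ (x : V) ∈ A}.Infinite

/-- Deleting the vertex set `S` from `G` leaves at least three connected components, each
containing infinitely many elements of `A`. -/
def ThreeEnds (G : SimpleGraph V) (S A : Set V) : Prop :=
  ∃ C₁ C₂ C₃ : (G.induce Sᶜ).ConnectedComponent,
    C₁ ≠ C₂ ∧ C₁ ≠ C₃ ∧ C₂ ≠ C₃ ∧
      CompInfinite G S A C₁ ∧ CompInfinite G S A C₂ ∧ CompInfinite G S A C₃

/-!
Fix three components of `T - v` each containing infinitely many points of `A`. Balls of a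
locally finite connected graph are finite, so each of them contains a point of `A` farther than
`r` from `o`, and a geodesic from `o` to that point crosses the sphere of radius `r` inside the
component, since `d(o, v) < r`. Moreover, whenever `d(o, v) < d(o, x)`, every vertex behind `x`
as seen from `o` lies in the component of `x` in `T - v`. Hence `A_{o,v'} ∪ A_{o,w'}` meets at
most two of the three components, and the third one supplies infinitely many points of `A`
outside it.
-/

namespace SimpleGraph

variable {G : SimpleGraph V}

lemma Walk.dist_add_dist_of_mem_support {u w x : V} {p : G.Walk u w}
    (hp : p.length = G.dist u w) (hx : x ∈ p.support) :
    G.dist u x + G.dist x w = G.dist u w := by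
  classical
  rw [← length_eq_dist_of_subwalk hp (p.isSubwalk_takeUntil hx),
    ← length_eq_dist_of_subwalk hp (p.isSubwalk_dropUntil hx), ← hp, ← Walk.length_append,
    p.take_spec hx]

lemma Connected.exists_dist_eq_of_le (hG : G.Connected) {u w : V} {n : ℕ}
    (hn : n ≤ G.dist u w) : ∃ x, G.dist u x = n ∧ G.dist u x + G.dist x w = G.dist u w := by
  obtain ⟨p, hp⟩ := hG.exists_walk_length_eq_dist u w
  refine ⟨p.getVert n, ?_, Walk.dist_add_dist_of_mem_support hp (p.getVert_mem_support n)⟩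
  rw [← length_eq_dist_of_subwalk hp (p.isSubwalk_take n), Walk.take_length, hp]
  omega

lemma Connected.finite_setOf_dist_le [G.LocallyFinite] (hG : G.Connected) (o : V) (n : ℕ) :
    {x | G.dist o x ≤ n}.Finite := by
  induction n with
  | zero => simp [hG.dist_eq_zero_iff]
  | succ n ih =>
    refine (ih.union (ih.biUnion fun y _ ↦ (G.neighborSet y).toFinite)).subset fun x hx ↦ ?_
    rcases Nat.le_succ_iff.mp hx with hle | hsucc
    · exact Or.inl hle
    · obtain ⟨y, hy, hyx⟩ := hG.exists_dist_eq_of_le (u := o) (w := x) (n := n) (by omega)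
      exact Or.inr (Set.mem_biUnion hy.le (dist_eq_one_iff_adj.mp (by omega)))

/-- A geodesic from `x` to `a` through `v` would put `v` farther from `o` than `x`. -/
lemma Connected.reachable_induce_compl_singleton (hG : G.Connected) {o v x a : V}
    (hv : G.dist o v < G.dist o x) (ha : G.dist o x + G.dist x a = G.dist o a)
    (hx : x ∈ ({v}ᶜ : Set V)) (ha' : a ∈ ({v}ᶜ : Set V)) :
    (G.induce {v}ᶜ).Reachable ⟨x, hx⟩ ⟨a, ha'⟩ := by
  obtain ⟨q, hq⟩ := hG.exists_walk_length_eq_dist x a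
  have hvq : ∀ y ∈ q.support, y ∈ ({v}ᶜ : Set V) := by
    rintro y hy rfl
    have := Walk.dist_add_dist_of_mem_support hq hy
    have := hG.dist_triangle (u := o) (v := y) (w := a)
    omega
  exact (q.induce _ hvq).reachable

lemma ConnectedComponent.exists_dist_eq_of_supp_infinite [G.LocallyFinite] (hG : G.Connected)
    {o v : V} {r : ℕ} (hr : G.dist o v < r) {C : (G.induce {v}ᶜ).ConnectedComponent}
    (hC : C.supp.Infinite) : ∃ x ∈ C.supp, G.dist o x = r := by
  obtain ⟨a, haC, hfar⟩ := (hC.sdiff ((hG.finite_setOf_dist_le o r).preimage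
    Subtype.val_injective.injOn)).nonempty
  obtain ⟨x, hxr, hxa⟩ := hG.exists_dist_eq_of_le (u := o) (w := a) (n := r)
    (by simp only [Set.mem_preimage, Set.mem_ofPred_eq] at hfar; omega)
  have hx : x ∈ ({v}ᶜ : Set V) := by rintro rfl; omega
  refine ⟨⟨x, hx⟩, ?_, hxr⟩
  rw [ConnectedComponent.mem_supp_iff, ← haC]
  exact ConnectedComponent.sound (hG.reachable_induce_compl_singleton (hxr ▸ hr) hxa hx a.2)

end SimpleGraph

open SimpleGraph

variable {G : SimpleGraph V}

lemma PassesThrough.dist_add_dist (hG : G.Connected) {u a x : V} (h : PassesThrough G u a x) :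
    G.dist u x + G.dist x a = G.dist u a := by
  obtain ⟨p, hp, hlen⟩ := hG.exists_path_of_dist u a
  exact Walk.dist_add_dist_of_mem_support hlen (h p hp)

lemma connectedComponentMk_eq_of_mem_branchSet (hG : G.Connected) {A : Set V} {o v x : V}
    (hv : G.dist o v < G.dist o x) (hx : x ∈ ({v}ᶜ : Set V)) {a : ({v}ᶜ : Set V)}
    (ha : (a : V) ∈ BranchSet G A o x) :
    (G.induce {v}ᶜ).connectedComponentMk a = (G.induce {v}ᶜ).connectedComponentMk ⟨x, hx⟩ :=
  (ConnectedComponent.sound (hG.reachable_induce_compl_singleton hv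
    (PassesThrough.dist_add_dist hG ha.2.2) hx a.2)).symm

lemma CompInfinite.supp_infinite {S A : Set V} {C : (G.induce Sᶜ).ConnectedComponent}
    (hC : CompInfinite G S A C) : C.supp.Infinite :=
  hC.mono fun _ hx ↦ hx.1

lemma ThreeEnds.exists_compInfinite_ne_ne {S A : Set V} (h : ThreeEnds G S A)
    (D₁ D₂ : (G.induce Sᶜ).ConnectedComponent) :
    ∃ C, CompInfinite G S A C ∧ C ≠ D₁ ∧ C ≠ D₂ := by
  obtain ⟨C₁, C₂, C₃, h₁₂, h₁₃, h₂₃, h₁, h₂, h₃⟩ := h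
  by_contra! H
  grind +splitImp

lemma ThreeEnds.exists_ne_dist_eq [G.LocallyFinite] (hG : G.Connected) {A : Set V} {v o : V}
    {r : ℕ} (h : ThreeEnds G {v} A) (hr : G.dist o v < r) :
    ∃ x y : V, x ≠ y ∧ G.dist o x = r ∧ G.dist o y = r := by
  obtain ⟨C₁, C₂, -, h₁₂, -, -, h₁, h₂, -⟩ := h
  obtain ⟨x, hx, hxr⟩ := ConnectedComponent.exists_dist_eq_of_supp_infinite hG hr h₁.supp_infinite
  obtain ⟨y, hy, hyr⟩ := ConnectedComponent.exists_dist_eq_of_supp_infinite hG hr h₂.supp_infinite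
  refine ⟨x, y, fun hxy ↦ h₁₂ ?_, hxr, hyr⟩
  rw [← hx, ← hy, Subtype.ext hxy]

lemma ThreeEnds.diff_branchSet_union_infinite (hG : G.Connected) {A : Set V} {v o x y : V}
    (h : ThreeEnds G {v} A) (hx : G.dist o v < G.dist o x) (hy : G.dist o v < G.dist o y) :
    (A \ (BranchSet G A o x ∪ BranchSet G A o y)).Infinite := by
  have hxv : x ∈ ({v}ᶜ : Set V) := by rintro rfl; omega
  have hyv : y ∈ ({v}ᶜ : Set V) := by rintro rfl; omega
  obtain ⟨C, hC, hCx, hCy⟩ := h.exists_compInfinite_ne_ne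
    ((G.induce {v}ᶜ).connectedComponentMk ⟨x, hxv⟩) ((G.induce {v}ᶜ).connectedComponentMk ⟨y, hyv⟩)
  refine (hC.image Subtype.val_injective.injOn).mono ?_
  rintro _ ⟨a, ⟨haC, haA⟩, rfl⟩
  refine ⟨haA, ?_⟩
  rintro (ha | ha)
  · exact hCx (haC ▸ connectedComponentMk_eq_of_mem_branchSet hG hx hxv ha)
  · exact hCy (haC ▸ connectedComponentMk_eq_of_mem_branchSet hG hy hyv ha)

theorem branching_near_triple_point_general (G : SimpleGraph V) (hT : G.IsTree)
    (hlf : G.LocallyFinite) (A : Set V) (r : ℕ) (v : V)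
    (h3 : ThreeEnds G {v} A) (o : V) (ho : G.dist o v < r) :
    (∃ x y : V, x ≠ y ∧ G.dist o x = r ∧ G.dist o y = r) ∧
      (∀ v' w' : V, G.dist o v' = r → G.dist o w' = r →
        (A \ (BranchSet G A o v' ∪ BranchSet G A o w')).Infinite) ∧
      (∀ k : ℕ, 1 ≤ k → IsBranching G A k r o) := by
  have hG := hT.connected
  have two_at_dist := h3.exists_ne_dist_eq hG ho
  have infinite_outside : ∀ v' w' : V, G.dist o v' = r → G.dist o w' = r →
      (A \ (BranchSet G A o v' ∪ BranchSet G A o w')).Infinite := fun v' w' hv' hw' ↦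
    h3.diff_branchSet_union_infinite hG (hv' ▸ ho) (hw' ▸ ho)
  refine ⟨two_at_dist, infinite_outside, fun k _ ↦ ⟨two_at_dist, fun v' w' hv' hw' ↦ ?_⟩⟩
  rw [(infinite_outside v' w' hv' hw').encard_eq]
  exact le_top

/-- If deleting the vertex `v` from a locally finite tree leaves at least three connected
components each containing infinitely many elements of `A`, and `o` is a vertex at distance
less than `r` from `v`, then (a) there are at least two distinct vertices at distance exactly
`r` from `o`; (b) for every pair of vertices `v', w'` at distance exactly `r` from `o`, the set
`A \ (A_{o,v'} ∪ A_{o,w'})` is infinite; and in particular `o` is `(k,r)`-branching for `A`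
for every `k ≥ 1`. -/
theorem branching_near_triple_point (G : SimpleGraph V) (hT : G.IsTree)
    (hlf : G.LocallyFinite) (A : Set V) (r : ℕ) (hr : 1 ≤ r) (v : V)
    (h3 : ThreeEnds G {v} A) (o : V) (ho : G.dist o v < r) :
    (∃ x y : V, x ≠ y ∧ G.dist o x = r ∧ G.dist o y = r) ∧
      (∀ v' w' : V, G.dist o v' = r → G.dist o w' = r →
        (A \ (BranchSet G A o v' ∪ BranchSet G A o w')).Infinite) ∧
      (∀ k : ℕ, 1 ≤ k → IsBranching G A k r o) :=
  branching_near_triple_point_general G hT hlf A r v h3 o ho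
end

section
/- Let T be a locally finite tree and let A be a set of vertices of T. Suppose there exists a finite set S of vertices of T such that deleting S from T leaves at least three connected components each containing infinitely many elements of A (i.e., A has at least three ends in T). Then there exists a single vertex v of T such that deleting v from T leaves at least three connected components each containing infinitely many elements of A. -/
variable {V : Type*}

/-!
Enlarge `S` to a finite set `H` spanning a subtree. By local finiteness `T - H` has only finitely
many components, so each of the three `A`-infinite components of `T - S` contains an `A`-infinite
component of `T - H`. Now delete leaves of `H` one at a time. If deleting the leaf `ℓ` merges two
of the three components, they merge through `ℓ`; in a tree they then hang off `ℓ` outside the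
branch at `ℓ` containing `H \ {ℓ}`, which forces all three into different branches at `ℓ`.
-/

open SimpleGraph

namespace SimpleGraph.ComponentCompl

variable {G : SimpleGraph V} {K L : Set V}

lemma mem_of_walk {C : G.ComponentCompl K} {u v : V} (p : G.Walk u v)
    (hp : ∀ x ∈ p.support, x ∉ K) (hu : u ∈ C) : v ∈ C := by
  induction p with
  | nil => exact hu
  | cons h p ih =>
    exact ih (fun x hx => hp x (List.mem_cons_of_mem _ hx))
      (mem_of_adj _ _ hu (hp _ (List.mem_cons_of_mem _ p.start_mem_support)) h)

lemma exists_walk_support_subset {C : G.ComponentCompl K} {u v : V} (hu : u ∈ C) (hv : v ∈ C) :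
    ∃ p : G.Walk u v, ∀ x ∈ p.support, x ∈ C := by
  classical
  obtain ⟨huK, rfl⟩ := hu
  obtain ⟨hvK, hv⟩ := hv
  obtain ⟨q⟩ := ConnectedComponent.exact hv.symm
  let p : G.Walk u v := q.map (Embedding.induce Kᶜ).toHom
  have hpK : ∀ x ∈ p.support, x ∉ K := by
    intro x hx
    have : x ∈ (q.map (Embedding.induce Kᶜ).toHom).support := hx
    rw [Walk.support_map, List.mem_map] at this
    obtain ⟨y, -, rfl⟩ := this
    exact y.2
  exact ⟨p, fun x hx => mem_of_walk (p.takeUntil x hx)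
    (fun y hy => hpK y (p.support_takeUntil_subset_support hx hy)) (componentComplMk_mem G huK)⟩

lemma eq_of_hom_eq_of_disjoint (h : K ⊆ L) {C C' : G.ComponentCompl L}
    (he : C.hom h = C'.hom h) (hd : Disjoint L (C.hom h)) : C = C' := by
  obtain ⟨c, hc⟩ := C.nonempty
  obtain ⟨c', hc'⟩ := C'.nonempty
  obtain ⟨p, hp⟩ := exists_walk_support_subset (C.subset_hom h hc) (he ▸ C'.subset_hom h hc')
  have hc'C : c' ∈ C := mem_of_walk p (fun x hx => hd.notMem_of_mem_right (hp x hx)) hc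
  by_contra hne
  exact Set.disjoint_left.1 (ComponentCompl.pairwise_disjoint hne) hc'C hc'

lemma mem_hom_of_hom_eq {ℓ : V} (h : L \ {ℓ} ⊆ L) {C C' : G.ComponentCompl L} (hne : C ≠ C')
    (he : C.hom h = C'.hom h) : ℓ ∈ C.hom h := by
  by_contra hℓC
  refine hne (eq_of_hom_eq_of_disjoint h he (Set.disjoint_left.2 fun x hxL hxC => ?_))
  obtain rfl : x = ℓ := by_contra fun hxℓ => notMem_of_mem hxC ⟨hxL, hxℓ⟩
  exact hℓC hxC

lemma hom_ne_hom_of_hom_ne {ℓ : V} (hℓL : {ℓ} ⊆ L) {β : G.ComponentCompl {ℓ}} (hβ : L \ {ℓ} ⊆ β)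
    {C C' : G.ComponentCompl L} (hne : C ≠ C') (hCβ : C.hom hℓL ≠ β) :
    C.hom hℓL ≠ C'.hom hℓL := by
  intro he
  refine hne (eq_of_hom_eq_of_disjoint hℓL he (Set.disjoint_left.2 fun x hxL hxC => ?_))
  by_cases hxℓ : x = ℓ
  · exact notMem_of_mem hxC hxℓ
  · exact Set.disjoint_left.1 (ComponentCompl.pairwise_disjoint hCβ) hxC (hβ ⟨hxL, hxℓ⟩)

/-- The path from `C` to `ℓ` avoids `K`; in a forest, the branch at `ℓ` through its neighbour `n`
consists of the vertices whose path to `ℓ` passes through `n`. -/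
lemma hom_ne_componentComplMk_of_mem_hom (hG : G.IsAcyclic) {ℓ n : V} (hKL : K ⊆ L)
    (hℓL : {ℓ} ⊆ L) (hnK : n ∈ K) (hnℓ : n ∉ ({ℓ} : Set V)) (hadj : G.Adj n ℓ)
    {C : G.ComponentCompl L} (hC : ℓ ∈ C.hom hKL) : C.hom hℓL ≠ G.componentComplMk hnℓ := by
  classical
  intro hbranch
  obtain ⟨c, hc⟩ := C.nonempty
  obtain ⟨q, hq⟩ := exists_walk_support_subset (C.subset_hom hKL hc) hC
  obtain ⟨p, hp⟩ := exists_walk_support_subset (hbranch ▸ C.subset_hom hℓL hc)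
    (componentComplMk_mem G hnℓ)
  have hnq : n ∉ q.bypass.support := fun h =>
    notMem_of_mem (hq n (q.support_bypass_subset_support h)) hnK
  have hℓp : ℓ ∈ p.bypass.support :=
    hG.mem_support_of_ne_mem_support_of_adj_of_isPath p.bypass_isPath q.bypass_isPath hadj hnq
  exact notMem_of_mem (hp ℓ (p.support_bypass_subset_support hℓp)) rfl

end SimpleGraph.ComponentCompl

variable {G : SimpleGraph V} {A : Set V}

lemma SimpleGraph.IsAcyclic.exists_leaf_of_connected_induce (hG : G.IsAcyclic) {H : Set V}
    [Finite H] [Nontrivial H] (hH : (G.induce H).Connected) :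
    ∃ ℓ ∈ H, ∃ n ∈ H \ {ℓ}, G.Adj n ℓ ∧ (G.induce (H \ {ℓ})).Connected := by
  classical
  have := Fintype.ofFinite H
  obtain ⟨ℓ, hℓ⟩ := (IsTree.mk hH (hG.induce H)).exists_vert_degree_one_of_nontrivial
  obtain ⟨n, hn, -⟩ := degree_eq_one_iff_existsUnique_adj.1 hℓ
  refine ⟨ℓ, ℓ.2, n, ⟨n.2, fun h => hn.ne (Subtype.ext h.symm)⟩, hn.symm, ?_⟩
  refine (hH.induce_compl_singleton_of_degree_eq_one hℓ).map
    ⟨fun x => ⟨x.1.1, x.1.2, fun hx => x.2 (Subtype.ext hx)⟩, fun hxy => hxy⟩ ?_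
  rintro ⟨x, hxH, hxℓ⟩
  exact ⟨⟨⟨x, hxH⟩, fun hx => hxℓ (congrArg Subtype.val hx)⟩, rfl⟩

lemma subset_componentComplMk_of_connected_induce {K s : Set V} (hs : (G.induce s).Connected)
    (hsK : s ⊆ Kᶜ) {v : V} (hv : v ∈ s) : s ⊆ G.componentComplMk (hsK hv) := by
  intro x hx
  refine ⟨hsK hx, ConnectedComponent.sound ?_⟩
  exact ((hs ⟨v, hv⟩ ⟨x, hx⟩).map (induceHomOfLE G hsK).toHom).symm

lemma compInfinite_iff {S : Set V} {C : G.ComponentCompl S} :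
    CompInfinite G S A C ↔ ((C : Set V) ∩ A).Infinite := by
  rw [CompInfinite, ← Set.infinite_image_iff Subtype.val_injective.injOn]
  congr!
  ext x
  constructor
  · rintro ⟨y, ⟨hy, hyA⟩, rfl⟩
    exact ⟨⟨y.2, hy⟩, hyA⟩
  · rintro ⟨⟨hx, hxC⟩, hxA⟩
    exact ⟨⟨x, hx⟩, ⟨hxC, hxA⟩, rfl⟩

lemma CompInfinite.hom {K L : Set V} (h : K ⊆ L) {C : G.ComponentCompl L}
    (hC : CompInfinite G L A C) : CompInfinite G K A (C.hom h) := by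
  rw [compInfinite_iff] at hC ⊢
  exact hC.mono (Set.inter_subset_inter_left A (C.subset_hom h))

lemma CompInfinite.exists_hom_eq [G.LocallyFinite] (hG : G.Preconnected) {S : Set V}
    {H : Finset V} (hSH : S ⊆ H) {C : G.ComponentCompl S} (hC : CompInfinite G S A C) :
    ∃ D : G.ComponentCompl H, CompInfinite G H A D ∧ D.hom hSH = C := by
  have : Fact G.Preconnected := ⟨hG⟩
  simp_rw [compInfinite_iff] at hC ⊢
  by_contra! hfin
  have hcover : ((C : Set V) ∩ A) \ H ⊆
      ⋃ D : {D : G.ComponentCompl H // D.hom hSH = C}, (D : Set V) ∩ A := by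
    rintro v ⟨⟨⟨hvS, hvC⟩, hvA⟩, hvH⟩
    exact Set.mem_iUnion.2 ⟨⟨G.componentComplMk hvH, hvC⟩, componentComplMk_mem G hvH, hvA⟩
  refine (hC.sdiff H.finite_toSet).mono hcover ?_
  exact Set.finite_iUnion fun D => Set.not_infinite.1 fun hD => hfin D hD D.2

lemma ThreeEnds.mono [G.LocallyFinite] (hG : G.Preconnected) {S : Set V} {H : Finset V}
    (hSH : S ⊆ H) (h : ThreeEnds G S A) : ThreeEnds G H A := by
  obtain ⟨C₁, C₂, C₃, h₁₂, h₁₃, h₂₃, hC₁, hC₂, hC₃⟩ := h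
  obtain ⟨D₁, hD₁, rfl⟩ := hC₁.exists_hom_eq hG hSH
  obtain ⟨D₂, hD₂, rfl⟩ := hC₂.exists_hom_eq hG hSH
  obtain ⟨D₃, hD₃, rfl⟩ := hC₃.exists_hom_eq hG hSH
  exact ⟨D₁, D₂, D₃, fun h => h₁₂ (h ▸ rfl), fun h => h₁₃ (h ▸ rfl), fun h => h₂₃ (h ▸ rfl),
    hD₁, hD₂, hD₃⟩

lemma ThreeEnds.diff_singleton_or_singleton (hG : G.IsAcyclic) {H : Set V} {ℓ n : V}
    (hℓ : ℓ ∈ H) (hn : n ∈ H \ {ℓ}) (hadj : G.Adj n ℓ)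
    (hbranch : H \ {ℓ} ⊆ G.componentComplMk hn.2) (h : ThreeEnds G H A) :
    ThreeEnds G (H \ {ℓ}) A ∨ ThreeEnds G {ℓ} A := by
  obtain ⟨C₁, C₂, C₃, h₁₂, h₁₃, h₂₃, hC₁, hC₂, hC₃⟩ := h
  have hsub : H \ {ℓ} ⊆ H := Set.sdiff_subset
  have hℓH : {ℓ} ⊆ H := Set.singleton_subset_iff.2 hℓ
  let P (C : G.ComponentCompl H) : Prop := ℓ ∈ C.hom hsub
  have merged : ∀ C C' : G.ComponentCompl H, C ≠ C' → C.hom hsub = C'.hom hsub → P C ∧ P C' :=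
    fun C C' hne he => ⟨ComponentCompl.mem_hom_of_hom_eq hsub hne he,
      ComponentCompl.mem_hom_of_hom_eq hsub hne.symm he.symm⟩
  have separated : ∀ C C' : G.ComponentCompl H, C ≠ C' → P C ∨ P C' →
      C.hom hℓH ≠ C'.hom hℓH := by
    rintro C C' hne (hP | hP)
    · exact ComponentCompl.hom_ne_hom_of_hom_ne hℓH hbranch hne
        (ComponentCompl.hom_ne_componentComplMk_of_mem_hom hG hsub hℓH hn hn.2 hadj hP)
    · exact (ComponentCompl.hom_ne_hom_of_hom_ne hℓH hbranch hne.symm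
        (ComponentCompl.hom_ne_componentComplMk_of_mem_hom hG hsub hℓH hn hn.2 hadj hP)).symm
  by_cases hP : (P C₁ ∧ P C₂) ∨ (P C₁ ∧ P C₃) ∨ (P C₂ ∧ P C₃)
  · exact Or.inr ⟨_, _, _, separated _ _ h₁₂ (by tauto), separated _ _ h₁₃ (by tauto),
      separated _ _ h₂₃ (by tauto), hC₁.hom hℓH, hC₂.hom hℓH, hC₃.hom hℓH⟩
  · exact Or.inl ⟨_, _, _, fun he => hP (Or.inl (merged _ _ h₁₂ he)),
      fun he => hP (Or.inr (Or.inl (merged _ _ h₁₃ he))),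
      fun he => hP (Or.inr (Or.inr (merged _ _ h₂₃ he))),
      hC₁.hom hsub, hC₂.hom hsub, hC₃.hom hsub⟩

lemma exists_threeEnds_singleton_of_connected_induce (hG : G.IsAcyclic) (H : Finset V)
    (hH : (G.induce (H : Set V)).Connected) (h : ThreeEnds G H A) : ∃ v, ThreeEnds G {v} A := by
  classical
  induction H using Finset.strongInduction with
  | H H ih =>
    rcases subsingleton_or_nontrivial (H : Set V) with hsub | hnt
    · obtain ⟨v⟩ := hH.nonempty
      exact ⟨v, (Set.subsingleton_coe _).1 hsub |>.eq_singleton_of_mem v.2 ▸ h⟩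
    · obtain ⟨ℓ, hℓ, n, hn, hadj, hconn⟩ := hG.exists_leaf_of_connected_induce hH
      have hbranch := subset_componentComplMk_of_connected_induce (K := {ℓ}) hconn
        (fun x hx => hx.2) hn
      rcases h.diff_singleton_or_singleton hG hℓ hn hadj hbranch with h' | h'
      · rw [← Finset.coe_erase] at hconn h'
        exact ih _ (Finset.erase_ssubset hℓ) hconn h'
      · exact ⟨ℓ, h'⟩

/-- If there is a finite set `S` of vertices of a locally finite tree `T` whose deletion leaves
at least three connected components each containing infinitely many elements of `A`, then there
is a single vertex `v` whose deletion leaves at least three connected components each containing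
infinitely many elements of `A`. -/
theorem three_ends_from_single_vertex (G : SimpleGraph V) (hT : G.IsTree)
    (hlf : G.LocallyFinite) (A : Set V) (S : Set V) (hS : S.Finite)
    (h3 : ThreeEnds G S A) :
    ∃ v : V, ThreeEnds G {v} A := by
  classical
  obtain ⟨r⟩ := hT.connected.nonempty
  obtain ⟨H, hSH, hH⟩ :=
    extend_finset_to_connected hT.connected.preconnected (Finset.insert_nonempty r hS.toFinset)
  have hSH' : S ⊆ H := fun v hv => hSH (Finset.mem_insert_of_mem (hS.mem_toFinset.2 hv))
  exact exists_threeEnds_singleton_of_connected_induce hT.isAcyclic H hH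
    (h3.mono hT.connected.preconnected hSH')
end

section
/- Every infinite locally finite tree T admits an end-orientation. Moreover, for every end-orientation σ of T there exists a level function ℓ from the vertex set of T to the integers ℤ satisfying ℓ(σ(v)) = ℓ(v) − 1 for every vertex v of T. -/
variable {V : Type*}

theorem iter_exp_inj_aux {σ : V → V} (hσ2 : ∀ v, ∀ n : ℕ, 1 ≤ n → σ^[n] v ≠ v) (v₀ : V)
    {a b : ℕ} (h : σ^[a] v₀ = σ^[b] v₀) : a = b := by
  rcases lt_trichotomy a b with h' | h' | h'
  · have : σ^[b - a + a] v₀ = σ^[a] v₀ := by rw [Nat.sub_add_cancel h'.le, h]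
    rw [Function.iterate_add_apply] at this
    exact absurd this (hσ2 _ _ (by omega))
  · exact h'
  · have : σ^[a - b + b] v₀ = σ^[b] v₀ := by rw [Nat.sub_add_cancel h'.le, ← h]
    rw [Function.iterate_add_apply] at this
    exact absurd this (hσ2 _ _ (by omega))

theorem level_aux_le {σ : V → V} (hσ2 : ∀ v, ∀ n : ℕ, 1 ≤ n → σ^[n] v ≠ v)
    {v₀ v : V} {m n m' n' : ℕ} (h : σ^[m] v = σ^[n] v₀) (h' : σ^[m'] v = σ^[n'] v₀)
    (hle : m ≤ m') : (m : ℤ) - n = (m' : ℤ) - n' := by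
  have e1 : σ^[m' - m + n] v₀ = σ^[n'] v₀ := by
    rw [Function.iterate_add_apply, ← h, ← Function.iterate_add_apply,
      Nat.sub_add_cancel hle, h']
  have := iter_exp_inj_aux hσ2 v₀ e1
  omega

theorem level_aux {σ : V → V} (hσ2 : ∀ v, ∀ n : ℕ, 1 ≤ n → σ^[n] v ≠ v)
    {v₀ v : V} {m n m' n' : ℕ} (h : σ^[m] v = σ^[n] v₀) (h' : σ^[m'] v = σ^[n'] v₀) :
    (m : ℤ) - n = (m' : ℤ) - n' := by
  rcases le_total m m' with hle | hle
  · exact level_aux_le hσ2 h h' hle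
  · exact (level_aux_le hσ2 h' h hle).symm

theorem exists_end_orientation_aux (G : SimpleGraph V) (hT : G.IsTree)
    (hlf : G.LocallyFinite) (hinf : Infinite V) :
    ∃ σ : V → V, IsEndOrientation G σ := by
  classical
  obtain ⟨root⟩ := (inferInstance : Nonempty V)
  have hconn : G.Connected := hT.isConnected
  set d : V → ℕ := fun v => G.dist root v with hd
  have hdroot : d root = 0 := SimpleGraph.dist_self
  have hdzero : ∀ v, d v = 0 → v = root := by
    intro v hv
    exact (hconn.dist_eq_zero_iff.mp hv).symm
  -- parent existence
  have hpar : ∀ v, v ≠ root → ∃ u, G.Adj v u ∧ d u + 1 = d v := by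
    intro v hv
    obtain ⟨w, hw⟩ := hconn.exists_walk_length_eq_dist v root
    cases w with
    | nil => exact absurd rfl hv
    | @cons _ u _ h q =>
      refine ⟨u, h, ?_⟩
      have h1 : d u ≤ q.length := by
        rw [hd]
        calc G.dist root u = G.dist u root := SimpleGraph.dist_comm
        _ ≤ q.length := SimpleGraph.dist_le q
      have h2 : d v ≤ d u + 1 := by
        have ht := hconn.dist_triangle (u := root) (v := u) (w := v)
        have : G.dist u v = 1 := SimpleGraph.dist_eq_one_iff_adj.mpr h.symm
        rw [this] at ht
        exact ht
      have h3 : d v = q.length + 1 := by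
        rw [hd]
        calc G.dist root v = G.dist v root := SimpleGraph.dist_comm
        _ = (SimpleGraph.Walk.cons h q).length := hw.symm
        _ = q.length + 1 := by simp [SimpleGraph.Walk.length_cons]
      omega
  set p : V → V := fun v => if h : v = root then root else (hpar v h).choose with hpdef
  have hp1 : ∀ v, v ≠ root → G.Adj v (p v) ∧ d (p v) + 1 = d v := by
    intro v hv
    have : p v = (hpar v hv).choose := by rw [hpdef]; exact dif_neg hv
    rw [this]
    exact (hpar v hv).choose_spec
  -- iterating the parent map reaches the root
  have hroot_iter : ∀ k v, d v = k → p^[k] v = root := by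
    intro k
    induction k with
    | zero => intro v hv; exact hdzero v hv
    | succ k ih =>
      intro v hv
      have hvne : v ≠ root := by intro e; rw [e, hdroot] at hv; omega
      rw [Function.iterate_succ_apply]
      exact ih (p v) (by have := (hp1 v hvne).2; omega)
  have hiter_d : ∀ j v, j ≤ d v → d (p^[j] v) = d v - j := by
    intro j
    induction j with
    | zero => intro v _; simp
    | succ j ih =>
      intro v hv
      have hvne : v ≠ root := by intro e; rw [e, hdroot] at hv; omega
      rw [Function.iterate_succ_apply]
      have h2 := (hp1 v hvne).2
      rw [ih (p v) (by omega)]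
      omega
  -- descendant sets
  set D : V → Set V := fun v => {w | ∃ k, p^[k] w = v ∧ d w = d v + k} with hDdef
  have hDrootInf : (D root).Infinite := by
    have : D root = Set.univ := by
      apply Set.eq_univ_of_forall
      intro w
      exact ⟨d w, hroot_iter (d w) w rfl, by omega⟩
    rw [this]
    exact Set.infinite_univ
  -- splitting: an infinite descendant set has a child with an infinite descendant set
  have hsplit : ∀ v, (D v).Infinite → ∃ u, p u = v ∧ d u = d v + 1 ∧ (D u).Infinite := by
    intro v hv
    set C : Set V := {u | p u = v ∧ d u = d v + 1} with hCdef
    have hCsub : C ⊆ G.neighborSet v := by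
      intro u hu
      obtain ⟨hu1, hu2⟩ := hu
      have hune : u ≠ root := by
        intro e; rw [e, hdroot] at hu2; omega
      have := (hp1 u hune).1
      rw [hu1] at this
      exact this.symm
    have hCfin : C.Finite := Set.Finite.subset (G.neighborSet v).toFinite hCsub
    by_contra hcon
    push_neg at hcon
    have hcover : D v \ {v} ⊆ ⋃ u ∈ C, D u := by
      rintro w ⟨⟨k, hk, hdk⟩, hw⟩
      have hk0 : k ≠ 0 := by
        intro e; rw [e] at hk; exact hw hk
      have hkd : k ≤ d w := by omega
      have hpu : p (p^[k-1] w) = v := by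
        have e1 : p (p^[k-1] w) = p^[k-1+1] w := (Function.iterate_succ_apply' p (k-1) w).symm
        rw [e1, show k - 1 + 1 = k from by omega]
        exact hk
      have hdu : d (p^[k-1] w) = d v + 1 := by
        rw [hiter_d (k-1) w (by omega)]
        omega
      refine Set.mem_biUnion (show p^[k-1] w ∈ C from ⟨hpu, hdu⟩) ?_
      exact ⟨k - 1, rfl, by omega⟩
    have hfin : (⋃ u ∈ C, D u).Finite := by
      apply Set.Finite.biUnion hCfin
      intro u hu
      obtain ⟨hu1, hu2⟩ := hu
      by_contra h
      exact h (hcon u hu1 hu2)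
    exact (hv.diff (Set.finite_singleton v)) (hfin.subset hcover)
  -- build the ray
  have hstep : ∀ x : {v // (D v).Infinite},
      ∃ u : {v // (D v).Infinite}, p u.1 = x.1 ∧ d u.1 = d x.1 + 1 := by
    intro x
    obtain ⟨u, h1, h2, h3⟩ := hsplit x.1 x.2
    exact ⟨⟨u, h3⟩, h1, h2⟩
  choose next hnext1 hnext2 using hstep
  set R : ℕ → {v // (D v).Infinite} :=
    fun k => Nat.rec ⟨root, hDrootInf⟩ (fun _ x => next x) k with hRdef
  set r : ℕ → V := fun k => (R k).1 with hrdef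
  have hr0 : r 0 = root := rfl
  have hrp : ∀ k, p (r (k+1)) = r k := fun k => hnext1 (R k)
  have hrd : ∀ k, d (r (k+1)) = d (r k) + 1 := fun k => hnext2 (R k)
  have hrdk : ∀ k, d (r k) = k := by
    intro k
    induction k with
    | zero => rw [hr0]; exact hdroot
    | succ k ih => rw [hrd k, ih]
  have hrinj : Function.Injective r := by
    intro a b h
    have ha := hrdk a
    rw [h, hrdk b] at ha
    omega
  have hradj : ∀ k, G.Adj (r k) (r (k+1)) := by
    intro k
    have hne : r (k+1) ≠ root := by
      intro e
      have := hrdk (k+1)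
      rw [e, hdroot] at this
      omega
    have := (hp1 _ hne).1
    rw [hrp k] at this
    exact this.symm
  -- the end-orientation
  set σ : V → V := fun v => if h : ∃ i, r i = v then r (Nat.find h + 1) else p v with hσdef
  have hσ_on : ∀ (v : V) (h : ∃ i, r i = v), σ v = r (Nat.find h + 1) := by
    intro v h
    rw [hσdef]
    exact dif_pos h
  have hσ_off : ∀ v, (¬ ∃ i, r i = v) → σ v = p v := by
    intro v h
    rw [hσdef]
    exact dif_neg h
  have hL1 : ∀ i, σ (r i) = r (i + 1) := by
    intro i
    have h : ∃ j, r j = r i := ⟨i, rfl⟩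
    rw [hσ_on (r i) h]
    have hfind : Nat.find h = i := hrinj (Nat.find_spec h)
    rw [hfind]
  have hL2 : ∀ n i, σ^[n] (r i) = r (i + n) := by
    intro n
    induction n with
    | zero => intro i; simp
    | succ n ih =>
      intro i
      rw [Function.iterate_succ_apply, hL1 i, ih (i+1)]
      have e : i + 1 + n = i + (n + 1) := by omega
      rw [e]
  have hL3 : ∀ v, ∃ k i, σ^[k] v = r i := by
    have key : ∀ N v, d v ≤ N → ∃ k i, σ^[k] v = r i := by
      intro N
      induction N with
      | zero =>
        intro v hv
        refine ⟨0, 0, ?_⟩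
        simp [hdzero v (by omega), hr0]
      | succ N ih =>
        intro v hv
        by_cases h : ∃ i, r i = v
        · obtain ⟨i, hi⟩ := h
          exact ⟨0, i, hi.symm⟩
        · have hvne : v ≠ root := by
            intro e
            exact h ⟨0, by rw [hr0, e]⟩
          have hdv := (hp1 v hvne).2
          obtain ⟨k, i, hk⟩ := ih (p v) (by omega)
          refine ⟨k + 1, i, ?_⟩
          rw [Function.iterate_succ_apply, hσ_off v h, hk]
    exact fun v => key (d v) v le_rfl
  -- well-defined level for σ
  have hwd_le : ∀ (v : V) (k i k' i' : ℕ), σ^[k] v = r i → σ^[k'] v = r i' → k ≤ k' →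
      (i : ℤ) - k = (i' : ℤ) - k' := by
    intro v k i k' i' h h' hle
    have e2 : σ^[k' - k + k] v = r (i + (k' - k)) := by
      rw [Function.iterate_add_apply, h, hL2]
    rw [show k' - k + k = k' from by omega, h'] at e2
    have := hrinj e2.symm
    omega
  have hwd : ∀ (v : V) (k i k' i' : ℕ), σ^[k] v = r i → σ^[k'] v = r i' →
      (i : ℤ) - k = (i' : ℤ) - k' := by
    intro v k i k' i' h h'
    rcases le_total k k' with hle | hle
    · exact hwd_le v k i k' i' h h' hle
    · exact (hwd_le v k' i' k i h' h hle).symm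
  choose kk ii hkk using hL3
  set ℓ : V → ℤ := fun v => (ii v : ℤ) - kk v with hℓdef
  have hstepℓ : ∀ v, ℓ (σ v) = ℓ v + 1 := by
    intro v
    have h2 : σ^[kk v] (σ v) = r (ii v + 1) := by
      rw [← Function.iterate_succ_apply, Function.iterate_succ_apply', hkk v, hL1]
    have := hwd (σ v) (kk (σ v)) (ii (σ v)) (kk v) (ii v + 1) (hkk (σ v)) h2
    rw [hℓdef]
    push_cast at this ⊢
    omega
  have hiterℓ : ∀ n v, ℓ (σ^[n] v) = ℓ v + n := by
    intro n
    induction n with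
    | zero => intro v; simp
    | succ n ih =>
      intro v
      rw [Function.iterate_succ_apply', hstepℓ, ih v]
      push_cast
      omega
  refine ⟨σ, ?_, ?_, ?_⟩
  · -- adjacency
    intro v
    by_cases h : ∃ i, r i = v
    · obtain ⟨i, hi⟩ := h
      subst hi
      rw [hL1 i]
      exact hradj i
    · rw [hσ_off v h]
      have hvne : v ≠ root := by
        intro e
        exact h ⟨0, by rw [hr0, e]⟩
      exact (hp1 v hvne).1
  · -- no periodic points
    intro v n hn h
    have := hiterℓ n v
    rw [h] at this
    omega
  · -- confluence
    intro u v
    refine ⟨ii v + kk u, ii u + kk v, ?_⟩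
    rw [Function.iterate_add_apply, hkk u, hL2, Function.iterate_add_apply, hkk v, hL2,
      Nat.add_comm (ii u) (ii v)]

/-- Every infinite locally finite tree admits an end-orientation, and every end-orientation
admits a level function `ℓ : V → ℤ` with `ℓ (σ v) = ℓ v - 1` for every vertex `v`. -/
theorem exists_end_orientation_and_level (G : SimpleGraph V) (hT : G.IsTree)
    (hlf : G.LocallyFinite) (hinf : Infinite V) :
    (∃ σ : V → V, IsEndOrientation G σ) ∧
      ∀ σ : V → V, IsEndOrientation G σ →
        ∃ ℓ : V → ℤ, ∀ v, ℓ (σ v) = ℓ v - 1 := by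
  classical
  refine ⟨exists_end_orientation_aux G hT hlf hinf, ?_⟩
  intro σ hσ
  obtain ⟨v₀⟩ := (inferInstance : Nonempty V)
  obtain ⟨_, hσ2, hσ3⟩ := hσ
  choose m n hmn using fun v => hσ3 v v₀
  refine ⟨fun v => (m v : ℤ) - n v, fun v => ?_⟩
  have h2 : σ^[m v] (σ v) = σ^[n v + 1] v₀ := by
    have e : σ^[m v + 1] v = σ^[n v + 1] v₀ := by
      rw [Function.iterate_succ_apply', Function.iterate_succ_apply', hmn v]
    rwa [Function.iterate_succ_apply] at e
  have := level_aux hσ2 (hmn (σ v)) h2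
  push_cast at this ⊢
  omega
end
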